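/- For odd positive integers n₁ = 2k+1 and n₃ = 2l+1 and n ≥ 2, the group ⟨x₁,…,xₙ | r₁ = e, …, rₙ = e, x₁x₂⋯xₙ = e⟩, where rᵢ = xᵢ⁻¹(xᵢ⁻ᵏ x_{i+1}^{k+1} xᵢ⁻¹)ˡ xᵢ⁻ᵏ x_{i+1}^{k+1} ((x_{i+1}⁻ᵏ x_{i+2}^{k+1} x_{i+1}⁻¹)ˡ x_{i+1}⁻ᵏ x_{i+2}^{k+1})⁻¹ with subscripts mod n, admits a complete presentation and hence is not left-orderable when n ≤ 3. -/

import Mathlib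

/-!
The relator `rᵢ` involves only `xᵢ, xᵢ₊₁, xᵢ₊₂`, with `xᵢ₊₁` occurring only positively and
`xᵢ, xᵢ₊₂` only negatively, and `x₁⋯xₙ` is positive. For `n ≤ 3` a sign sequence is either
constant, and blocked by `x₁⋯xₙ`, or differs from the others at exactly one index `i + 1`, and
blocked by `rᵢ`.

Given a left order, let `ε` record the signs of the generators: the relator blocking `ε` maps to
a nonempty product of elements of one sign, hence not to `1`, provided no generator is trivial.
For that, abelianize: with `K = (k+1)(l+1)` the relator `rᵢ` becomes
`(2K-1)xᵢ₊₁ - K(xᵢ + xᵢ₊₂)`, so weights of total sum zero in a ring where `4K = 1` (`n = 2`)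
or `3K = 1` (`n = 3`) define a quotient, and `xⱼ ↦ 1, xⱼ₊₁ ↦ -1` detects `xⱼ`.
-/

/-- A group is left-orderable if there is a strict total order that is left-invariant. -/
def IsLeftOrderable (G : Type*) [Group G] : Prop :=
  ∃ r : G → G → Prop, IsStrictTotalOrder G r ∧ ∀ x y z : G, r x y → r (z * x) (z * y)

/-- A nonempty reduced word `w` blocks a sign sequence `ε` (where `true` stands for `+1`
and `false` for `-1`) if all letters of `w` appear with sign agreeing with `ε`, or all
letters appear with sign disagreeing with `ε`. -/
def Blocks {α : Type*} [DecidableEq α] (w : FreeGroup α) (ε : α → Bool) : Prop :=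
  w ≠ 1 ∧ ((∀ p ∈ w.toWord, p.2 = ε p.1) ∨ (∀ p ∈ w.toWord, p.2 ≠ ε p.1))

/-- The relator
`rᵢ = xᵢ⁻¹ (xᵢ⁻ᵏ x_{i+1}^{k+1} xᵢ⁻¹)ˡ xᵢ⁻ᵏ x_{i+1}^{k+1}
  ((x_{i+1}⁻ᵏ x_{i+2}^{k+1} x_{i+1}⁻¹)ˡ x_{i+1}⁻ᵏ x_{i+2}^{k+1})⁻¹`,
with subscripts taken modulo `n`, for the 2-bridge knot `[2k+1, 1, 2l+1]`. -/
def bridgeRel (n k l : ℕ) (i : ZMod n) : FreeGroup (ZMod n) :=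
  (FreeGroup.of i)⁻¹ *
    (((FreeGroup.of i) ^ k)⁻¹ * (FreeGroup.of (i + 1)) ^ (k + 1) * (FreeGroup.of i)⁻¹) ^ l *
    ((FreeGroup.of i) ^ k)⁻¹ * (FreeGroup.of (i + 1)) ^ (k + 1) *
    ((((FreeGroup.of (i + 1)) ^ k)⁻¹ * (FreeGroup.of (i + 2)) ^ (k + 1) *
        (FreeGroup.of (i + 1))⁻¹) ^ l *
      ((FreeGroup.of (i + 1)) ^ k)⁻¹ * (FreeGroup.of (i + 2)) ^ (k + 1))⁻¹

/-- The relators `r₁, …, rₙ` together with `x₁x₂⋯xₙ`. -/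
def bridgeRels (n k l : ℕ) : Set (FreeGroup (ZMod n)) :=
  {w | ∃ i : ZMod n, w = bridgeRel n k l i} ∪
    {((List.range n).map (fun j => FreeGroup.of ((j : ZMod n)))).prod}

namespace FreeGroup

variable {α : Type*}

section LetterSigns

variable [DecidableEq α]

def HasLetterSigns (f : α → Bool) (w : FreeGroup α) : Prop :=
  ∀ p ∈ w.toWord, p.2 = f p.1

variable {f : α → Bool} {u v : FreeGroup α}

theorem hasLetterSigns_one (f : α → Bool) : HasLetterSigns f 1 := by
  simp [HasLetterSigns]

theorem hasLetterSigns_of {a : α} (h : f a = true) : HasLetterSigns f (of a) := by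
  simp [HasLetterSigns, toWord_of, h]

theorem HasLetterSigns.mul (hu : HasLetterSigns f u) (hv : HasLetterSigns f v) :
    HasLetterSigns f (u * v) := fun p hp =>
  (List.mem_append.1 ((toWord_mul_sublist u v).subset hp)).elim (hu p) (hv p)

theorem HasLetterSigns.pow (hu : HasLetterSigns f u) (m : ℕ) : HasLetterSigns f (u ^ m) := by
  induction m with
  | zero => exact hasLetterSigns_one f
  | succ m ih => rw [pow_succ]; exact ih.mul hu

theorem HasLetterSigns.inv (hu : HasLetterSigns (fun a => !f a) u) : HasLetterSigns f u⁻¹ := by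
  intro p hp
  rw [toWord_inv, invRev, List.mem_reverse, List.mem_map] at hp
  obtain ⟨q, hq, rfl⟩ := hp
  simp [hu q hq]

theorem hasLetterSigns_list_prod {L : List (FreeGroup α)} (hL : ∀ w ∈ L, HasLetterSigns f w) :
    HasLetterSigns f L.prod :=
  List.prod_induction _ (fun _ _ => HasLetterSigns.mul) (hasLetterSigns_one f) hL

theorem blocks_of_hasLetterSigns {w : FreeGroup α} {ε : α → Bool} (hw : w ≠ 1)
    (hf : HasLetterSigns f w) (hε : (∀ a, ε a = f a) ∨ ∀ a, ε a = !f a) : Blocks w ε :=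
  ⟨hw, hε.imp (fun h p hp => by rw [hf p hp, h]) fun h p hp => by simp [hf p hp, h]⟩

end LetterSigns

def weightHom {A : Type*} [AddCommGroup A] (g : α → A) : FreeGroup α →* Multiplicative A :=
  lift fun a => Multiplicative.ofAdd (g a)

@[simp]
theorem toAdd_weightHom_of {A : Type*} [AddCommGroup A] (g : α → A) (a : α) :
    (weightHom g (of a)).toAdd = g a := by
  simp [weightHom]

end FreeGroup

open FreeGroup (HasLetterSigns weightHom)

theorem PresentedGroup.of_ne_one_of_lift {α G : Type*} [Group G] {rels : Set (FreeGroup α)}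
    {f : α → G} (hf : ∀ r ∈ rels, FreeGroup.lift f r = 1) {a : α} (ha : f a ≠ 1) :
    (PresentedGroup.of a : PresentedGroup rels) ≠ 1 := fun h =>
  ha (by rw [← PresentedGroup.toGroup.of hf, h, map_one])

section LeftOrder

variable {G : Type*} {r : G → G → Prop}

theorem rel_iff_not_rel_of_ne [IsStrictTotalOrder G r] {a b : G} (h : a ≠ b) :
    r a b ↔ ¬ r b a :=
  ⟨fun hab hba => asymm hab hba, fun hba => by
    by_contra hab
    exact h (Std.Trichotomous.trichotomous a b hab hba)⟩

variable [Group G]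

theorem one_rel_inv_iff (hmul : ∀ x y z : G, r x y → r (z * x) (z * y)) {x : G} :
    r 1 x⁻¹ ↔ r x 1 :=
  ⟨fun h => by simpa using hmul 1 x⁻¹ x h, fun h => by simpa using hmul x 1 x⁻¹ h⟩

variable [IsStrictTotalOrder G r]

theorem rel_one_mul (hmul : ∀ x y z : G, r x y → r (z * x) (z * y)) {x y : G} (hx : r 1 x)
    (hy : r 1 y) : r 1 (x * y) :=
  _root_.trans hx (by simpa using hmul 1 y x hy)

theorem map_ne_one_of_hasLetterSigns {α : Type*} [DecidableEq α] [DecidableRel r]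
    (hmul : ∀ x y z : G, r x y → r (z * x) (z * y)) (φ : FreeGroup α →* G)
    (hφ : ∀ a, φ (.of a) ≠ 1) {w : FreeGroup α} (hw : w ≠ 1)
    (hsigns : w.HasLetterSigns fun a => decide (r 1 (φ (.of a)))) : φ w ≠ 1 := by
  have hpos : r 1 (φ w) := by
    rw [← FreeGroup.mk_toWord (x := w), FreeGroup.lift_unique (f := fun a => φ (.of a)) φ
      (fun _ => rfl), FreeGroup.lift_mk]
    refine List.prod_induction_nonempty _ (fun _ _ => rel_one_mul hmul)
      (by simpa [FreeGroup.toWord_eq_nil_iff] using hw) ?_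
    simp only [List.mem_map]
    rintro _ ⟨⟨a, s⟩, hp, rfl⟩
    have hs := hsigns _ hp
    cases s
    · exact (one_rel_inv_iff hmul).2 ((rel_iff_not_rel_of_ne (hφ a)).2 (by simpa using hs))
    · simpa using hs
  exact fun h => irrefl (r := r) 1 (h ▸ hpos)

theorem not_isLeftOrderable_of_complete {α : Type*} [DecidableEq α] {rels : Set (FreeGroup α)}
    (hcomplete : ∀ ε : α → Bool, ∃ w ∈ rels, Blocks w ε)
    (hof : ∀ a, (PresentedGroup.of a : PresentedGroup rels) ≠ 1) :
    ¬ IsLeftOrderable (PresentedGroup rels) := by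
  classical
  rintro ⟨r, hr, hmul⟩
  obtain ⟨w, hw, hne, hagree | hdisagree⟩ := hcomplete fun a => decide (r 1 (.of a))
  · exact map_ne_one_of_hasLetterSigns hmul (PresentedGroup.mk rels) hof hne hagree
      (PresentedGroup.one_of_mem hw)
  · -- letters all negative: they are positive for the reversed order
    refine map_ne_one_of_hasLetterSigns (r := Function.swap r) (fun x y z h => hmul y x z h)
      (PresentedGroup.mk rels) hof hne (fun p hp => ?_) (PresentedGroup.one_of_mem hw)
    have hp' : p.2 ≠ decide (r 1 (PresentedGroup.of p.1)) := hdisagree p hp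
    show p.2 = decide (r (PresentedGroup.of p.1) 1)
    rw [decide_eq_decide.mpr (rel_iff_not_rel_of_ne (hof p.1)), decide_not]
    exact Bool.eq_not.mpr hp'

end LeftOrder

theorem ZMod.list_sum_map_range {M : Type*} [AddCommMonoid M] (n : ℕ) [NeZero n]
    (g : ZMod n → M) : ((List.range n).map fun j : ℕ => g j).sum = ∑ t, g t := by
  obtain ⟨m, rfl⟩ : ∃ m, n = m + 1 := Nat.exists_eq_succ_of_ne_zero (NeZero.ne n)
  rw [← List.sum_toFinset _ List.nodup_range, List.toFinset_range, ← Fin.sum_univ_eq_sum_range]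
  exact Fintype.sum_congr _ _ fun t => congrArg g (ZMod.natCast_zmod_val (n := m + 1) t)

theorem ZMod.sum_eq_list_sum_map_range_add {M : Type*} [AddCommMonoid M] (n : ℕ) [NeZero n]
    (g : ZMod n → M) (i : ZMod n) :
    ∑ t, g t = ((List.range n).map fun j : ℕ => g (i + j)).sum :=
  (Equiv.sum_comp (Equiv.addLeft i) g).symm.trans (ZMod.list_sum_map_range n _).symm

theorem ZMod.exists_commRing_natCast_eq_one {N : ℕ} (hN : 3 ≤ N) :
    ∃ (R : Type) (_ : CommRing R) (_ : Nontrivial R), (N : R) = 1 := by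
  obtain ⟨m, rfl⟩ : ∃ m, N = m + 1 := ⟨N - 1, by omega⟩
  have : Fact (1 < m) := ⟨by omega⟩
  exact ⟨ZMod m, inferInstance, inferInstance, by simp⟩

theorem add_two_ne_add_one {R : Type*} [Ring R] [Nontrivial R] (i : R) : i + 2 ≠ i + 1 := by
  rw [← one_add_one_eq_two, ← add_assoc]
  simp

section Bridge

variable {n : ℕ} (k l : ℕ)

theorem toAdd_weightHom_bridgeRel {R : Type*} [CommRing R] (g : ZMod n → R) (i : ZMod n) :
    (weightHom g (bridgeRel n k l i)).toAdd =
      (2 * ((k + 1) * (l + 1)) - 1) * g (i + 1) - (k + 1) * (l + 1) * (g i + g (i + 2)) := by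
  simp only [bridgeRel, map_mul, map_inv, map_pow, toAdd_mul, toAdd_inv, toAdd_pow,
    FreeGroup.toAdd_weightHom_of, nsmul_eq_mul]
  push_cast
  ring

theorem toAdd_weightHom_prod_range {A : Type*} [AddCommGroup A] [NeZero n] (g : ZMod n → A) :
    (weightHom g ((List.range n).map (fun j => FreeGroup.of ((j : ZMod n)))).prod).toAdd =
      ∑ t, g t := by
  simp only [List.pure_def, List.bind_eq_flatMap, ← List.map_eq_flatMap, map_list_prod,
    toAdd_list_sum, List.map_map]
  rw [← ZMod.list_sum_map_range]
  simp [Function.comp_def]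

theorem bridgeRel_hasLetterSigns [Nontrivial (ZMod n)] (i : ZMod n) :
    HasLetterSigns (fun t => decide (t = i + 1)) (bridgeRel n k l i) := by
  have h1 : i ≠ i + 1 := by simp
  have h2 := add_two_ne_add_one i
  unfold bridgeRel
  repeat'
    first
    | apply HasLetterSigns.mul
    | apply HasLetterSigns.pow
    | apply HasLetterSigns.inv
    | exact FreeGroup.hasLetterSigns_of (by simp [h1, h2])

theorem prod_range_hasLetterSigns :
    HasLetterSigns (fun _ => true)
      ((List.range n).map (fun j => FreeGroup.of ((j : ZMod n)))).prod :=
  FreeGroup.hasLetterSigns_list_prod (by simp [FreeGroup.hasLetterSigns_of])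

theorem bridgeRel_ne_one [Nontrivial (ZMod n)] (i : ZMod n) : bridgeRel n k l i ≠ 1 := by
  have h1 : i ≠ i + 1 := by simp
  have h2 := add_two_ne_add_one i
  intro h
  have h' := congrArg (fun w => (weightHom (fun t => if t = i + 1 then (1 : ℤ) else 0) w).toAdd) h
  simp [toAdd_weightHom_bridgeRel, h1, h2] at h'
  nlinarith

theorem prod_range_ne_one [NeZero n] :
    ((List.range n).map (fun j => FreeGroup.of ((j : ZMod n)))).prod ≠ 1 := by
  intro h
  have h' := congrArg (fun w => (weightHom (fun _ : ZMod n => (1 : ℤ)) w).toAdd) h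
  simp only [toAdd_weightHom_prod_range, map_one, toAdd_one] at h'
  simp at h'
  exact NeZero.ne n h'

theorem bridgeRels_complete [NeZero n] [Nontrivial (ZMod n)]
    (hsigns : ∀ ε : ZMod n → Bool, (∃ b, ∀ t, ε t = b) ∨
      ∃ j, (∀ t, ε t = decide (t = j)) ∨ ∀ t, ε t = !decide (t = j))
    (ε : ZMod n → Bool) : ∃ w ∈ bridgeRels n k l, Blocks w ε := by
  rcases hsigns ε with ⟨b, hb⟩ | ⟨j, hj⟩
  · refine ⟨_, Or.inr rfl, FreeGroup.blocks_of_hasLetterSigns prod_range_ne_one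
      prod_range_hasLetterSigns ?_⟩
    cases b
    · exact Or.inr hb
    · exact Or.inl hb
  · refine ⟨_, Or.inl ⟨j - 1, rfl⟩, FreeGroup.blocks_of_hasLetterSigns (bridgeRel_ne_one k l _)
      (bridgeRel_hasLetterSigns k l _) ?_⟩
    simpa using hj

theorem signs_const_or_indicator (hn : 2 ≤ n) (hn3 : n ≤ 3) (ε : ZMod n → Bool) :
    (∃ b, ∀ t, ε t = b) ∨ ∃ j, (∀ t, ε t = decide (t = j)) ∨ ∀ t, ε t = !decide (t = j) := by
  interval_cases n <;> revert ε <;> decide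

theorem bridgeRels_of_ne_one_of_ring (R : Type*) [CommRing R] [Nontrivial R] [NeZero n]
    [Nontrivial (ZMod n)]
    (hrel : ∀ g : ZMod n → R, ∑ t, g t = 0 → ∀ i, (2 * ((k + 1) * (l + 1)) - 1) * g (i + 1) =
      (k + 1) * (l + 1) * (g i + g (i + 2)))
    (j : ZMod n) : (PresentedGroup.of j : PresentedGroup (bridgeRels n k l)) ≠ 1 := by
  let g : ZMod n → R := Pi.single j 1 - Pi.single (j + 1) 1
  have hsum : ∑ t, g t = 0 := by simp [g]
  refine PresentedGroup.of_ne_one_of_lift (f := fun t => Multiplicative.ofAdd (g t)) ?_ ?_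
  · rintro _ (⟨i, rfl⟩ | rfl)
    · change weightHom g _ = 1
      rw [← toAdd_eq_zero, toAdd_weightHom_bridgeRel, hrel g hsum i, sub_self]
    · change weightHom g _ = 1
      rw [← toAdd_eq_zero, toAdd_weightHom_prod_range, hsum]
  · simp [g]

end Bridge

theorem bridgeRel_weight_relation_two {R : Type*} [CommRing R] {K : R} (hK : 4 * K = 1)
    (g : ZMod 2 → R) (hsum : ∑ t, g t = 0) (i : ZMod 2) :
    (2 * K - 1) * g (i + 1) = K * (g i + g (i + 2)) := by
  have hs : g i + g (i + 1) = 0 := by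
    simpa [ZMod.sum_eq_list_sum_map_range_add 2 g i, List.range_succ] using hsum
  rw [show (2 : ZMod 2) = 0 from rfl, add_zero]
  linear_combination g (i + 1) * hK - 2 * K * hs

theorem bridgeRel_weight_relation_three {R : Type*} [CommRing R] {K : R} (hK : 3 * K = 1)
    (g : ZMod 3 → R) (hsum : ∑ t, g t = 0) (i : ZMod 3) :
    (2 * K - 1) * g (i + 1) = K * (g i + g (i + 2)) := by
  have hs : g i + (g (i + 1) + g (i + 2)) = 0 := by
    simpa [ZMod.sum_eq_list_sum_map_range_add 3 g i, List.range_succ] using hsum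
  linear_combination g (i + 1) * hK - K * hs

theorem bridgeRels_of_ne_one {n : ℕ} (k l : ℕ) (hn : 2 ≤ n) (hn3 : n ≤ 3) (j : ZMod n) :
    (PresentedGroup.of j : PresentedGroup (bridgeRels n k l)) ≠ 1 := by
  have hK : 1 ≤ (k + 1) * (l + 1) := Nat.one_le_iff_ne_zero.2 (by positivity)
  interval_cases n
  · obtain ⟨R, _, _, hR⟩ := ZMod.exists_commRing_natCast_eq_one (N := 4 * ((k + 1) * (l + 1)))
      (by omega)
    exact bridgeRels_of_ne_one_of_ring k l R
      (bridgeRel_weight_relation_two (by exact_mod_cast hR)) j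
  · obtain ⟨R, _, _, hR⟩ := ZMod.exists_commRing_natCast_eq_one (N := 3 * ((k + 1) * (l + 1)))
      (by omega)
    exact bridgeRels_of_ne_one_of_ring k l R
      (bridgeRel_weight_relation_three (by exact_mod_cast hR)) j

/-- For odd `n₁ = 2k+1`, `n₃ = 2l+1` and `2 ≤ n ≤ 3`, the group
`⟨x₁,…,xₙ | r₁ = e, …, rₙ = e, x₁x₂⋯xₙ = e⟩` admits a complete presentation and hence
is not left-orderable. -/
theorem stmt_19 (n k l : ℕ) (hn : 2 ≤ n) (hn3 : n ≤ 3) :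
    (∀ ε : ZMod n → Bool, ∃ w ∈ bridgeRels n k l, Blocks w ε) ∧
      ¬ IsLeftOrderable (PresentedGroup (bridgeRels n k l)) := by
  have : NeZero n := ⟨by omega⟩
  have : Fact (1 < n) := ⟨hn⟩
  have hcomplete := bridgeRels_complete k l (signs_const_or_indicator hn hn3)
  exact ⟨hcomplete, not_isLeftOrderable_of_complete hcomplete (bridgeRels_of_ne_one k l hn hn3)⟩
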